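/- arXiv:2109.08856 — 3 statements merged into one kernel-verified Lean document; each statement's English description precedes it below -/
import Mathlib

section
/- There exist an assignment problem with n = 6 agents and 6 items, a preference profile, and a deterministic assignment that satisfies favoring-higher-ranks (FHR) but does not satisfy favoring-eagerness-for-remaining-items (FERI). -/
open Finset

noncomputable section

namespace FeriPaper

/-- A preference profile: `R j o o'` means agent `j` strictly prefers item `o` to `o'`. -/
abbrev Pref (n : ℕ) := Fin n → Fin n → Fin n → Prop

/-- Every agent's preference is a strict linear (total) order on the items. -/
def IsProfile {n : ℕ} (R : Pref n) : Prop :=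
  ∀ j : Fin n, IsStrictTotalOrder (Fin n) (R j)

/-- Profiles as a type (for mechanisms). -/
def Profile (n : ℕ) := { R : Pref n // IsProfile R }

/-- `o` is agent `j`'s most preferred item in the set `S`. -/
def IsTopIn {n : ℕ} (R : Pref n) (j : Fin n) (S : Set (Fin n)) (o : Fin n) : Prop :=
  o ∈ S ∧ ∀ o' ∈ S, o' ≠ o → R j o o'

/-- `Tunion R A r` is the union `T_1(A) ∪ ⋯ ∪ T_r(A)` (so `Tunion R A 0 = ∅`). -/
def Tunion {n : ℕ} (R : Pref n) (A : Equiv.Perm (Fin n)) : ℕ → Set (Fin n)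
  | 0 => ∅
  | r + 1 =>
      Tunion R A r ∪
        {o | ∃ j : Fin n, A j ∉ Tunion R A r ∧ IsTopIn R j (Tunion R A r)ᶜ o}

/-- `Tset R A r` is the set `T_{r+1}(A)` (0-based round index). -/
def Tset {n : ℕ} (R : Pref n) (A : Equiv.Perm (Fin n)) (r : ℕ) : Set (Fin n) :=
  {o | ∃ j : Fin n, A j ∉ Tunion R A r ∧ IsTopIn R j (Tunion R A r)ᶜ o}

/-- Favoring-eagerness-for-remaining-items (FERI). -/
def FERI {n : ℕ} (R : Pref n) (A : Equiv.Perm (Fin n)) : Prop :=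
  ∀ r : ℕ, ∀ o ∈ Tset R A r, IsTopIn R (A.symm o) (Tunion R A r)ᶜ o

/-- Pareto efficiency (PE) of a deterministic assignment. -/
def ParetoEff {n : ℕ} (R : Pref n) (A : Equiv.Perm (Fin n)) : Prop :=
  ¬ ∃ (A' : Equiv.Perm (Fin n)) (N' : Set (Fin n)), N'.Nonempty ∧
      (∀ j ∈ N', R j (A' j) (A j)) ∧ ∀ k, k ∉ N' → A' k = A k

/-- Number of agents receiving their overall first choice. -/
def firstChoiceCount {n : ℕ} (R : Pref n) (A : Equiv.Perm (Fin n)) : ℕ :=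
  {j : Fin n | IsTopIn R j Set.univ (A j)}.ncard

/-- First-choice maximality (FCM). -/
def FCM {n : ℕ} (R : Pref n) (A : Equiv.Perm (Fin n)) : Prop :=
  ¬ ∃ A' : Equiv.Perm (Fin n), firstChoiceCount R A < firstChoiceCount R A'

/-- Rank of item `o` in agent `j`'s preference (1 = most preferred). -/
def rank {n : ℕ} (R : Pref n) (j o : Fin n) : ℕ :=
  {o' : Fin n | R j o' o ∨ o' = o}.ncard

/-- Favoring-higher-ranks (FHR). -/
def FHR {n : ℕ} (R : Pref n) (A : Equiv.Perm (Fin n)) : Prop :=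
  ∀ j k : Fin n, rank R j (A j) ≤ rank R k (A j) ∨ rank R k (A k) < rank R k (A j)

/-- Popularity (POP). -/
def POP {n : ℕ} (R : Pref n) (A : Equiv.Perm (Fin n)) : Prop :=
  ¬ ∃ A' : Equiv.Perm (Fin n),
      {j : Fin n | R j (A j) (A' j)}.ncard < {j : Fin n | R j (A' j) (A j)}.ncard

/-- Signature of a deterministic assignment: `signature R A r` is the number of agents
    assigned their `r`-th ranked item. -/
def signature {n : ℕ} (R : Pref n) (A : Equiv.Perm (Fin n)) (r : ℕ) : ℕ :=
  {j : Fin n | rank R j (A j) = r}.ncard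

/-- `x` dominates `y` as signatures. -/
def SigDom (x y : ℕ → ℕ) : Prop :=
  ∃ r : ℕ, y r < x r ∧ ∀ r' < r, y r' ≤ x r'

/-- Rank maximality (RM). -/
def RM {n : ℕ} (R : Pref n) (A : Equiv.Perm (Fin n)) : Prop :=
  ¬ ∃ A' : Equiv.Perm (Fin n), SigDom (signature R A') (signature R A)

/-- A random assignment: a doubly stochastic matrix. -/
def DoublyStochastic {n : ℕ} (P : Fin n → Fin n → ℝ) : Prop :=
  (∀ j o, 0 ≤ P j o) ∧ (∀ j, ∑ o, P j o = 1) ∧ (∀ o, ∑ j, P j o = 1)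

/-- The 0-1 permutation matrix of a deterministic assignment. -/
def permMatrix {n : ℕ} (A : Equiv.Perm (Fin n)) : Fin n → Fin n → ℝ :=
  fun j o => if A j = o then 1 else 0

/-- Upper contour set of item `o` under the strict preference `pr`. -/
def ucs {n : ℕ} (pr : Fin n → Fin n → Prop) (o : Fin n) : Set (Fin n) :=
  {x | pr x o ∨ x = o}

/-- Total probability mass on the upper contour set of `o`. -/
def upperSum {n : ℕ} (pr : Fin n → Fin n → Prop) (p : Fin n → ℝ) (o : Fin n) : ℝ :=
  ∑ x, (ucs pr o).indicator p x

/-- `p` (weakly) stochastically dominates `q` w.r.t. the strict preference `pr`. -/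
def SD {n : ℕ} (pr : Fin n → Fin n → Prop) (p q : Fin n → ℝ) : Prop :=
  ∀ o, upperSum pr q o ≤ upperSum pr p o

/-- sd-envy-freeness. -/
def sdEF {n : ℕ} (R : Pref n) (P : Fin n → Fin n → ℝ) : Prop :=
  ∀ j k : Fin n, SD (R j) (P j) (P k)

/-- sd-weak-envy-freeness. -/
def sdWEF {n : ℕ} (R : Pref n) (P : Fin n → Fin n → ℝ) : Prop :=
  ∀ j k : Fin n, SD (R j) (P k) (P j) → P j = P k

/-- The common prefix of the preferences of agents `j` and `k`: items all of whose
    (weak) upper contour sets w.r.t. `j` coincide for `j` and `k`. -/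
def commonPrefix {n : ℕ} (R : Pref n) (j k : Fin n) : Set (Fin n) :=
  {o | ∀ x ∈ ucs (R j) o, ucs (R j) x = ucs (R k) x}

/-- Strong equal treatment of equals (SETE). -/
def SETE {n : ℕ} (R : Pref n) (P : Fin n → Fin n → ℝ) : Prop :=
  ∀ j k : Fin n, ∀ o ∈ commonPrefix R j k, P j o = P k o

/-- A random assignment satisfies a property `X` ex post if it is a convex combination
    of (permutation matrices of) deterministic assignments each satisfying `X`. -/
def ExPost {n : ℕ} (X : Equiv.Perm (Fin n) → Prop) (P : Fin n → Fin n → ℝ) : Prop :=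
  ∃ w : Equiv.Perm (Fin n) → ℝ, (∀ A, 0 ≤ w A) ∧ (∑ A, w A) = 1 ∧
    (∀ A, w A ≠ 0 → X A) ∧ ∀ j o, P j o = ∑ A, w A * permMatrix A j o

/-- Ex-ante favoring-higher-ranks (ea-FHR). -/
def EaFHR {n : ℕ} (R : Pref n) (P : Fin n → Fin n → ℝ) : Prop :=
  ∀ j o, 0 < P j o → ∀ k, rank R k o < rank R j o → upperSum (R k) (P k) o = 1

/-- The eating structure for ea-FERI: `(eaState R P r).1 = M_{P,r+1}` and
    `(eaState R P r).2 o = ⋃_{r' ≤ r+1} E_{P,r'}(o)` (1-based indexing on the right). -/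
def eaState {n : ℕ} (R : Pref n) (P : Fin n → Fin n → ℝ) :
    ℕ → Set (Fin n) × (Fin n → Set (Fin n))
  | 0 => (Set.univ, fun o => {j | IsTopIn R j Set.univ o})
  | r + 1 =>
      let prev := eaState R P r
      let M : Set (Fin n) := {o | ∑ k, (prev.2 o).indicator (fun k' => P k' o) k < 1}
      (M, fun o => prev.2 o ∪ {j | IsTopIn R j M o})

/-- `eaM R P r = M_{P,r+1}` (0-based round index). -/
def eaM {n : ℕ} (R : Pref n) (P : Fin n → Fin n → ℝ) (r : ℕ) : Set (Fin n) :=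
  (eaState R P r).1

/-- `eaE R P r o = E_{P,r+1}(o)` (0-based round index). -/
def eaE {n : ℕ} (R : Pref n) (P : Fin n → Fin n → ℝ) (r : ℕ) (o : Fin n) : Set (Fin n) :=
  {j | IsTopIn R j (eaM R P r) o}

/-- Ex-ante FERI (ea-FERI). -/
def EaFERI {n : ℕ} (R : Pref n) (P : Fin n → Fin n → ℝ) : Prop :=
  ∀ r : ℕ, ∀ o ∈ eaM R P r, ∀ j : Fin n, (∃ r' < r, j ∈ eaE R P r' o) →
    upperSum (R j) (P j) o = 1

/-- sd-Pareto-efficiency (sd-PE). -/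
def SdPE {n : ℕ} (R : Pref n) (P : Fin n → Fin n → ℝ) : Prop :=
  ¬ ∃ Q : Fin n → Fin n → ℝ, DoublyStochastic Q ∧ Q ≠ P ∧ ∀ j, SD (R j) (Q j) (P j)

/-- `A` is the output of the adaptive Boston mechanism with priority order `prio`
    (`prio j k` means `j` has higher priority than `k`): in every round, every item that
    receives applicants is assigned to its highest-priority applicant. -/
def ABMOutcome {n : ℕ} (prio : Fin n → Fin n → Prop) (R : Pref n)
    (A : Equiv.Perm (Fin n)) : Prop :=
  ∀ r : ℕ, ∀ o ∈ Tset R A r,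
    IsTopIn R (A.symm o) (Tunion R A r)ᶜ o ∧
      ∀ j : Fin n, A j ∉ Tunion R A r → IsTopIn R j (Tunion R A r)ᶜ o →
        j ≠ A.symm o → prio (A.symm o) j

end FeriPaper


namespace FeriPaper

/-- Rank table for the counterexample: `exF j o` is the 0-based rank of item `o`
    for agent `j`. -/
def exF : Fin 6 → Fin 6 → ℕ
  | 0, 0 => 3 | 0, 1 => 5 | 0, 2 => 4 | 0, 3 => 1 | 0, 4 => 2 | 0, 5 => 0
  | 1, 0 => 3 | 1, 1 => 5 | 1, 2 => 1 | 1, 3 => 2 | 1, 4 => 4 | 1, 5 => 0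
  | 2, 0 => 2 | 2, 1 => 4 | 2, 2 => 0 | 2, 3 => 3 | 2, 4 => 1 | 2, 5 => 5
  | 3, 0 => 1 | 3, 1 => 4 | 3, 2 => 5 | 3, 3 => 0 | 3, 4 => 2 | 3, 5 => 3
  | 4, 0 => 5 | 4, 1 => 4 | 4, 2 => 2 | 4, 3 => 0 | 4, 4 => 1 | 4, 5 => 3
  | 5, 0 => 4 | 5, 1 => 1 | 5, 2 => 5 | 5, 3 => 3 | 5, 4 => 2 | 5, 5 => 0

/-- The counterexample preference profile. -/
def exR : Pref 6 := fun j o o' => exF j o < exF j o'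

lemma exR_profile : IsProfile exR := by
  intro j
  refine { trichotomous := ?_, irrefl := ?_, trans := ?_ }
  · intro a b hab hba
    rcases Nat.lt_trichotomy (exF j a) (exF j b) with h | h | h
    · exact absurd h hab
    · clear hab hba
      revert h; revert a b; revert j; decide
    · exact absurd h hba
  · intro a; exact Nat.lt_irrefl _
  · intro a b c hab hbc; exact Nat.lt_trans hab hbc

lemma exR_rank (j o : Fin 6) :
    rank exR j o = (Finset.univ.filter (fun o' => exF j o' < exF j o ∨ o' = o)).card := by
  rw [rank, ← Set.ncard_coe_finset]
  congr 1
  ext x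
  simp [exR]

lemma ex_fhr : FHR exR (Equiv.refl (Fin 6)) := by
  intro j k
  simp only [Equiv.refl_apply, exR_rank]
  revert j k; decide

lemma ex_tun0 : Tunion exR (Equiv.refl (Fin 6)) 0 = ∅ := rfl

lemma ex_tun1 :
    Tunion exR (Equiv.refl (Fin 6)) 1 = {x : Fin 6 | x = 2 ∨ x = 3 ∨ x = 5} := by
  ext x
  show x ∈ Tunion exR (Equiv.refl (Fin 6)) 0 ∪ _ ↔ _
  simp only [ex_tun0, Set.mem_union, Set.mem_empty_iff_false, Set.mem_setOf_eq, false_or,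
    IsTopIn, Set.mem_compl_iff, Set.notMem_empty, not_false_iff, true_and, exR]
  revert x; decide

lemma ex_not_feri : ¬ FERI exR (Equiv.refl (Fin 6)) := by
  intro h
  have h0 : (0 : Fin 6) ∈ Tset exR (Equiv.refl (Fin 6)) 1 := by
    refine ⟨1, ?_, ?_, ?_⟩
    · rw [ex_tun1]; simp only [Set.mem_setOf_eq, Equiv.refl_apply]; decide
    · rw [Set.mem_compl_iff, ex_tun1]; simp only [Set.mem_setOf_eq]; decide
    · intro o' ho' hne
      rw [Set.mem_compl_iff, ex_tun1, Set.mem_setOf_eq] at ho'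
      show exF 1 0 < exF 1 o'
      revert hne ho'; revert o'; decide
  have htop := h 1 0 h0
  have h4 : (4 : Fin 6) ∈ (Tunion exR (Equiv.refl (Fin 6)) 1)ᶜ := by
    rw [Set.mem_compl_iff, ex_tun1]; simp only [Set.mem_setOf_eq]; decide
  have h45 := htop.2 4 h4 (by decide)
  simp only [Equiv.refl_symm, Equiv.refl_apply] at h45
  exact absurd (show exF 0 0 < exF 0 4 from h45) (by decide)

end FeriPaper

namespace FeriPaper
/-- FHR does not imply FERI (witnessed with 6 agents and 6 items). -/
theorem fhr_not_imp_feri :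
    ∃ R : Pref 6, IsProfile R ∧
      ∃ A : Equiv.Perm (Fin 6), FHR R A ∧ ¬ FERI R A :=
  ⟨exR, exR_profile, Equiv.refl (Fin 6), ex_fhr, ex_not_feri⟩

end FeriPaper
end
end

section
/- There exists a preference profile on an assignment problem with n = 6 agents and 6 items such that no random assignment simultaneously satisfies ex-ante favoring-higher-ranks (ea-FHR), strong equal treatment of equals (SETE), and sd-weak-envy-freeness (sd-WEF); consequently, no mechanism on this instance satisfies all three properties. -/
open Finset

noncomputable section

namespace FeriPaper
-- ===================== auxiliary development =====================

/-- Rank tables for the hard instance (0-based positions). -/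
def rkT : List (List ℕ) :=
  [[0,1,2,3,4,5],[0,1,2,4,3,5],[1,0,2,3,4,5],[1,0,2,4,3,5],[4,5,1,0,2,3],[4,5,1,0,2,3]]

def rk (j o : Fin 6) : ℕ := (rkT.getD j.val []).getD o.val 0

/-- The hard preference profile. -/
def Rex : Pref 6 := fun j o o' => rk j o < rk j o'

instance decRex : ∀ j o o' : Fin 6, Decidable (Rex j o o') :=
  fun j o o' => Nat.decLt (rk j o) (rk j o')

lemma rank_eq_card (j o : Fin 6) :
    rank Rex j o = (Finset.univ.filter (fun o' => Rex j o' o ∨ o' = o)).card := by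
  rw [rank, ← Set.ncard_coe_finset]
  congr 1
  ext x
  simp

lemma us_expand (k : Fin 6) (p : Fin 6 → ℝ) (o : Fin 6) :
    upperSum (Rex k) p o = ∑ x, if Rex k x o ∨ x = o then p x else 0 := by
  simp [upperSum, ucs, Set.indicator_apply, Set.mem_setOf_eq]

lemma usA (p : Fin 6 → ℝ) : upperSum (Rex 4) p 3 = p 3 := by
  rw [us_expand, Fin.sum_univ_six, if_neg (by decide), if_neg (by decide),
    if_neg (by decide), if_pos (by decide), if_neg (by decide), if_neg (by decide)]
  ring

lemma usB (p : Fin 6 → ℝ) : upperSum (Rex 5) p 3 = p 3 := by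
  rw [us_expand, Fin.sum_univ_six, if_neg (by decide), if_neg (by decide),
    if_neg (by decide), if_pos (by decide), if_neg (by decide), if_neg (by decide)]
  ring

lemma usC (p : Fin 6 → ℝ) : upperSum (Rex 4) p 2 = p 2 + p 3 := by
  rw [us_expand, Fin.sum_univ_six, if_neg (by decide), if_neg (by decide),
    if_pos (by decide), if_pos (by decide), if_neg (by decide), if_neg (by decide)]
  ring

lemma usD (p : Fin 6 → ℝ) : upperSum (Rex 5) p 2 = p 2 + p 3 := by
  rw [us_expand, Fin.sum_univ_six, if_neg (by decide), if_neg (by decide),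
    if_pos (by decide), if_pos (by decide), if_neg (by decide), if_neg (by decide)]
  ring

lemma usE (p : Fin 6 → ℝ) : upperSum (Rex 0) p 0 = p 0 := by
  rw [us_expand, Fin.sum_univ_six, if_pos (by decide), if_neg (by decide),
    if_neg (by decide), if_neg (by decide), if_neg (by decide), if_neg (by decide)]
  ring

lemma usF (p : Fin 6 → ℝ) : upperSum (Rex 1) p 0 = p 0 := by
  rw [us_expand, Fin.sum_univ_six, if_pos (by decide), if_neg (by decide),
    if_neg (by decide), if_neg (by decide), if_neg (by decide), if_neg (by decide)]
  ring

lemma usG (p : Fin 6 → ℝ) : upperSum (Rex 2) p 1 = p 1 := by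
  rw [us_expand, Fin.sum_univ_six, if_neg (by decide), if_pos (by decide),
    if_neg (by decide), if_neg (by decide), if_neg (by decide), if_neg (by decide)]
  ring

lemma usH (p : Fin 6 → ℝ) : upperSum (Rex 3) p 1 = p 1 := by
  rw [us_expand, Fin.sum_univ_six, if_neg (by decide), if_pos (by decide),
    if_neg (by decide), if_neg (by decide), if_neg (by decide), if_neg (by decide)]
  ring

lemma usI (p : Fin 6 → ℝ) : upperSum (Rex 1) p 4 = p 0 + p 1 + p 2 + p 4 := by
  rw [us_expand, Fin.sum_univ_six, if_pos (by decide), if_pos (by decide),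
    if_pos (by decide), if_neg (by decide), if_pos (by decide), if_neg (by decide)]
  ring

lemma usJ (p : Fin 6 → ℝ) : upperSum (Rex 3) p 4 = p 0 + p 1 + p 2 + p 4 := by
  rw [us_expand, Fin.sum_univ_six, if_pos (by decide), if_pos (by decide),
    if_pos (by decide), if_neg (by decide), if_pos (by decide), if_neg (by decide)]
  ring

lemma us00 (p : Fin 6 → ℝ) : upperSum (Rex 0) p 0 = p 0 := usE p

lemma us01 (p : Fin 6 → ℝ) : upperSum (Rex 0) p 1 = p 0 + p 1 := by
  rw [us_expand, Fin.sum_univ_six, if_pos (by decide), if_pos (by decide),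
    if_neg (by decide), if_neg (by decide), if_neg (by decide), if_neg (by decide)]
  ring

lemma us02 (p : Fin 6 → ℝ) : upperSum (Rex 0) p 2 = p 0 + p 1 + p 2 := by
  rw [us_expand, Fin.sum_univ_six, if_pos (by decide), if_pos (by decide),
    if_pos (by decide), if_neg (by decide), if_neg (by decide), if_neg (by decide)]
  ring

lemma us03 (p : Fin 6 → ℝ) : upperSum (Rex 0) p 3 = p 0 + p 1 + p 2 + p 3 := by
  rw [us_expand, Fin.sum_univ_six, if_pos (by decide), if_pos (by decide),
    if_pos (by decide), if_pos (by decide), if_neg (by decide), if_neg (by decide)]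
  ring

lemma us04 (p : Fin 6 → ℝ) : upperSum (Rex 0) p 4 = p 0 + p 1 + p 2 + p 3 + p 4 := by
  rw [us_expand, Fin.sum_univ_six, if_pos (by decide), if_pos (by decide),
    if_pos (by decide), if_pos (by decide), if_pos (by decide), if_neg (by decide)]
  ring

lemma us05 (p : Fin 6 → ℝ) : upperSum (Rex 0) p 5 = p 0 + p 1 + p 2 + p 3 + p 4 + p 5 := by
  rw [us_expand, Fin.sum_univ_six, if_pos (by decide), if_pos (by decide),
    if_pos (by decide), if_pos (by decide), if_pos (by decide), if_pos (by decide)]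

lemma profile_Rex : IsProfile Rex := by
  have hinj : ∀ j a b : Fin 6, rk j a = rk j b → a = b := by decide
  intro j
  exact
    { irrefl := fun a => Nat.lt_irrefl _
      trans := fun a b c h1 h2 => Nat.lt_trans h1 h2
      trichotomous := fun a b h1 h2 =>
        hinj j a b (Nat.le_antisymm (Nat.not_lt.mp h2) (Nat.not_lt.mp h1)) }

lemma m00 : (0 : Fin 6) ∈ commonPrefix Rex 0 1 := by
  intro x hx
  have hx' : Rex 0 x 0 ∨ x = 0 := hx
  have h0 : x = 0 :=
    (by decide : ∀ y : Fin 6, (Rex 0 y 0 ∨ y = 0) → y = 0) x hx'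
  subst h0
  ext y
  exact (by decide : ∀ y : Fin 6, ((Rex 0 y 0 ∨ y = 0) ↔ (Rex 1 y 0 ∨ y = 0))) y

lemma m21 : (1 : Fin 6) ∈ commonPrefix Rex 2 3 := by
  intro x hx
  have hx' : Rex 2 x 1 ∨ x = 1 := hx
  have h0 : x = 1 :=
    (by decide : ∀ y : Fin 6, (Rex 2 y 1 ∨ y = 1) → y = 1) x hx'
  subst h0
  ext y
  exact (by decide : ∀ y : Fin 6, ((Rex 2 y 1 ∨ y = 1) ↔ (Rex 3 y 1 ∨ y = 1))) y

/-- On some 6-agent instance, no random assignment satisfies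
ea-FHR, SETE and sd-WEF simultaneously. -/
theorem no_eaFHR_SETE_sdWEF :
    ∃ R : Pref 6, IsProfile R ∧
      ∀ P : Fin 6 → Fin 6 → ℝ, DoublyStochastic P →
        ¬ (EaFHR R P ∧ SETE R P ∧ sdWEF R P) := by
  refine ⟨Rex, profile_Rex, ?_⟩
  rintro P ⟨hpos, hrow, hcol⟩ ⟨hFHR, hSETE, hWEF⟩
  have hr0 := hrow 0; rw [Fin.sum_univ_six] at hr0
  have hr1 := hrow 1; rw [Fin.sum_univ_six] at hr1
  have hr3 := hrow 3; rw [Fin.sum_univ_six] at hr3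
  have hr4 := hrow 4; rw [Fin.sum_univ_six] at hr4
  have hr5 := hrow 5; rw [Fin.sum_univ_six] at hr5
  have hc0 := hcol 0; rw [Fin.sum_univ_six] at hc0
  have hc1 := hcol 1; rw [Fin.sum_univ_six] at hc1
  have hc2 := hcol 2; rw [Fin.sum_univ_six] at hc2
  have hc3 := hcol 3; rw [Fin.sum_univ_six] at hc3
  have hc4 := hcol 4; rw [Fin.sum_univ_six] at hc4
  -- Step 1: rows 0-3 get nothing of item 3 (agents 4,5 rank it first)
  have z03 : P 0 3 = 0 := by
    by_contra hne
    have hp : 0 < P 0 3 := (hpos 0 3).lt_of_ne (Ne.symm hne)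
    have e4 := hFHR 0 3 hp 4 (by rw [rank_eq_card, rank_eq_card]; decide)
    have e5 := hFHR 0 3 hp 5 (by rw [rank_eq_card, rank_eq_card]; decide)
    rw [usA] at e4; rw [usB] at e5
    linarith [hpos 1 3, hpos 2 3, hpos 3 3]
  have z13 : P 1 3 = 0 := by
    by_contra hne
    have hp : 0 < P 1 3 := (hpos 1 3).lt_of_ne (Ne.symm hne)
    have e4 := hFHR 1 3 hp 4 (by rw [rank_eq_card, rank_eq_card]; decide)
    have e5 := hFHR 1 3 hp 5 (by rw [rank_eq_card, rank_eq_card]; decide)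
    rw [usA] at e4; rw [usB] at e5
    linarith [hpos 0 3, hpos 2 3, hpos 3 3]
  have z23 : P 2 3 = 0 := by
    by_contra hne
    have hp : 0 < P 2 3 := (hpos 2 3).lt_of_ne (Ne.symm hne)
    have e4 := hFHR 2 3 hp 4 (by rw [rank_eq_card, rank_eq_card]; decide)
    have e5 := hFHR 2 3 hp 5 (by rw [rank_eq_card, rank_eq_card]; decide)
    rw [usA] at e4; rw [usB] at e5
    linarith [hpos 0 3, hpos 1 3, hpos 3 3]
  have z33 : P 3 3 = 0 := by
    by_contra hne
    have hp : 0 < P 3 3 := (hpos 3 3).lt_of_ne (Ne.symm hne)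
    have e4 := hFHR 3 3 hp 4 (by rw [rank_eq_card, rank_eq_card]; decide)
    have e5 := hFHR 3 3 hp 5 (by rw [rank_eq_card, rank_eq_card]; decide)
    rw [usA] at e4; rw [usB] at e5
    linarith [hpos 0 3, hpos 1 3, hpos 2 3]
  have hc3' : P 4 3 + P 5 3 = 1 := by linarith
  -- Step 2: rows 0-3 get nothing of item 2 (agents 4,5 rank it second)
  have z02 : P 0 2 = 0 := by
    by_contra hne
    have hp : 0 < P 0 2 := (hpos 0 2).lt_of_ne (Ne.symm hne)
    have e4 := hFHR 0 2 hp 4 (by rw [rank_eq_card, rank_eq_card]; decide)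
    have e5 := hFHR 0 2 hp 5 (by rw [rank_eq_card, rank_eq_card]; decide)
    rw [usC] at e4; rw [usD] at e5
    linarith [hpos 1 2, hpos 2 2, hpos 3 2]
  have z12 : P 1 2 = 0 := by
    by_contra hne
    have hp : 0 < P 1 2 := (hpos 1 2).lt_of_ne (Ne.symm hne)
    have e4 := hFHR 1 2 hp 4 (by rw [rank_eq_card, rank_eq_card]; decide)
    have e5 := hFHR 1 2 hp 5 (by rw [rank_eq_card, rank_eq_card]; decide)
    rw [usC] at e4; rw [usD] at e5
    linarith [hpos 0 2, hpos 2 2, hpos 3 2]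
  have z22 : P 2 2 = 0 := by
    by_contra hne
    have hp : 0 < P 2 2 := (hpos 2 2).lt_of_ne (Ne.symm hne)
    have e4 := hFHR 2 2 hp 4 (by rw [rank_eq_card, rank_eq_card]; decide)
    have e5 := hFHR 2 2 hp 5 (by rw [rank_eq_card, rank_eq_card]; decide)
    rw [usC] at e4; rw [usD] at e5
    linarith [hpos 0 2, hpos 1 2, hpos 3 2]
  have z32 : P 3 2 = 0 := by
    by_contra hne
    have hp : 0 < P 3 2 := (hpos 3 2).lt_of_ne (Ne.symm hne)
    have e4 := hFHR 3 2 hp 4 (by rw [rank_eq_card, rank_eq_card]; decide)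
    have e5 := hFHR 3 2 hp 5 (by rw [rank_eq_card, rank_eq_card]; decide)
    rw [usC] at e4; rw [usD] at e5
    linarith [hpos 0 2, hpos 1 2, hpos 2 2]
  have hc2' : P 4 2 + P 5 2 = 1 := by linarith
  -- Step 3: rows 4,5 are concentrated on items 2,3
  have key : P 4 0 + P 4 1 + P 4 4 + P 4 5 + P 5 0 + P 5 1 + P 5 4 + P 5 5 = 0 := by
    linarith
  have z40 : P 4 0 = 0 := by
    linarith [hpos 4 0, hpos 4 1, hpos 4 4, hpos 4 5, hpos 5 0, hpos 5 1, hpos 5 4, hpos 5 5]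
  have z41 : P 4 1 = 0 := by
    linarith [hpos 4 0, hpos 4 1, hpos 4 4, hpos 4 5, hpos 5 0, hpos 5 1, hpos 5 4, hpos 5 5]
  have z44 : P 4 4 = 0 := by
    linarith [hpos 4 0, hpos 4 1, hpos 4 4, hpos 4 5, hpos 5 0, hpos 5 1, hpos 5 4, hpos 5 5]
  have z50 : P 5 0 = 0 := by
    linarith [hpos 4 0, hpos 4 1, hpos 4 4, hpos 4 5, hpos 5 0, hpos 5 1, hpos 5 4, hpos 5 5]
  have z51 : P 5 1 = 0 := by
    linarith [hpos 4 0, hpos 4 1, hpos 4 4, hpos 4 5, hpos 5 0, hpos 5 1, hpos 5 4, hpos 5 5]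
  have z54 : P 5 4 = 0 := by
    linarith [hpos 4 0, hpos 4 1, hpos 4 4, hpos 4 5, hpos 5 0, hpos 5 1, hpos 5 4, hpos 5 5]
  -- Step 4: item 0 goes to agents 0,1 in equal halves
  have z20 : P 2 0 = 0 := by
    by_contra hne
    have hp : 0 < P 2 0 := (hpos 2 0).lt_of_ne (Ne.symm hne)
    have e0 := hFHR 2 0 hp 0 (by rw [rank_eq_card, rank_eq_card]; decide)
    have e1 := hFHR 2 0 hp 1 (by rw [rank_eq_card, rank_eq_card]; decide)
    rw [usE] at e0; rw [usF] at e1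
    linarith [hpos 3 0]
  have z30 : P 3 0 = 0 := by
    by_contra hne
    have hp : 0 < P 3 0 := (hpos 3 0).lt_of_ne (Ne.symm hne)
    have e0 := hFHR 3 0 hp 0 (by rw [rank_eq_card, rank_eq_card]; decide)
    have e1 := hFHR 3 0 hp 1 (by rw [rank_eq_card, rank_eq_card]; decide)
    rw [usE] at e0; rw [usF] at e1
    linarith [hpos 2 0]
  have hs01 : P 0 0 = P 1 0 := hSETE 0 1 0 m00
  have ha0 : P 0 0 = 1/2 := by linarith
  have hb0 : P 1 0 = 1/2 := by linarith
  -- Step 5: item 1 goes to agents 2,3 in equal halves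
  have z01 : P 0 1 = 0 := by
    by_contra hne
    have hp : 0 < P 0 1 := (hpos 0 1).lt_of_ne (Ne.symm hne)
    have e2 := hFHR 0 1 hp 2 (by rw [rank_eq_card, rank_eq_card]; decide)
    have e3 := hFHR 0 1 hp 3 (by rw [rank_eq_card, rank_eq_card]; decide)
    rw [usG] at e2; rw [usH] at e3
    linarith [hpos 1 1]
  have z11 : P 1 1 = 0 := by
    by_contra hne
    have hp : 0 < P 1 1 := (hpos 1 1).lt_of_ne (Ne.symm hne)
    have e2 := hFHR 1 1 hp 2 (by rw [rank_eq_card, rank_eq_card]; decide)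
    have e3 := hFHR 1 1 hp 3 (by rw [rank_eq_card, rank_eq_card]; decide)
    rw [usG] at e2; rw [usH] at e3
    linarith [hpos 0 1]
  have hs23 : P 2 1 = P 3 1 := hSETE 2 3 1 m21
  have hd1 : P 3 1 = 1/2 := by linarith
  -- Step 6: agents 0,2 get nothing of item 4
  have z04 : P 0 4 = 0 := by
    by_contra hne
    have hp : 0 < P 0 4 := (hpos 0 4).lt_of_ne (Ne.symm hne)
    have e1 := hFHR 0 4 hp 1 (by rw [rank_eq_card, rank_eq_card]; decide)
    have e3 := hFHR 0 4 hp 3 (by rw [rank_eq_card, rank_eq_card]; decide)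
    rw [usI] at e1; rw [usJ] at e3
    linarith [hpos 2 4]
  have z24 : P 2 4 = 0 := by
    by_contra hne
    have hp : 0 < P 2 4 := (hpos 2 4).lt_of_ne (Ne.symm hne)
    have e1 := hFHR 2 4 hp 1 (by rw [rank_eq_card, rank_eq_card]; decide)
    have e3 := hFHR 2 4 hp 3 (by rw [rank_eq_card, rank_eq_card]; decide)
    rw [usI] at e1; rw [usJ] at e3
    linarith [hpos 0 4]
  -- Step 7: pin down rows 0 and 1 completely
  have hb4 : P 1 4 = 1/2 := by linarith [hpos 1 5, hpos 3 5]
  have hb5 : P 1 5 = 0 := by linarith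
  have ha5 : P 0 5 = 1/2 := by linarith
  -- Step 8: agent 1's allocation stochastically dominates agent 0's
  have dom : SD (Rex 0) (P 1) (P 0) := by
    intro o
    fin_cases o
    · show upperSum (Rex 0) (P 0) 0 ≤ upperSum (Rex 0) (P 1) 0
      rw [us00, us00]; linarith
    · show upperSum (Rex 0) (P 0) 1 ≤ upperSum (Rex 0) (P 1) 1
      rw [us01, us01]; linarith
    · show upperSum (Rex 0) (P 0) 2 ≤ upperSum (Rex 0) (P 1) 2
      rw [us02, us02]; linarith
    · show upperSum (Rex 0) (P 0) 3 ≤ upperSum (Rex 0) (P 1) 3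
      rw [us03, us03]; linarith
    · show upperSum (Rex 0) (P 0) 4 ≤ upperSum (Rex 0) (P 1) 4
      rw [us04, us04]; linarith
    · show upperSum (Rex 0) (P 0) 5 ≤ upperSum (Rex 0) (P 1) 5
      rw [us05, us05]; linarith
  have hPeq : P 0 = P 1 := hWEF 0 1 dom
  have hcontra : P 0 4 = P 1 4 := by rw [hPeq]
  linarith

end FeriPaper
end
end

section
/- For every assignment problem and preference profile, a deterministic assignment (viewed as its 0-1 permutation matrix, which is a random assignment) satisfies favoring-eagerness-for-remaining-items (FERI) if and only if it satisfies ex-ante favoring-eagerness-for-remaining-items (ea-FERI). -/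
open Finset

noncomputable section

namespace FeriPaper

section Aux
open scoped Classical
variable {n : ℕ}

lemma Tunion_succ' (R : Pref n) (A : Equiv.Perm (Fin n)) (r : ℕ) :
    Tunion R A (r+1) = Tunion R A r ∪ Tset R A r := rfl

lemma mem_Tunion (R : Pref n) (A : Equiv.Perm (Fin n)) :
    ∀ r o, o ∈ Tunion R A r ↔ ∃ r' < r, o ∈ Tset R A r' := by
  intro r
  induction r with
  | zero => intro o; simp [Tunion]
  | succ r ih =>
    intro o
    rw [Tunion_succ']
    constructor
    · rintro (h | h)
      · obtain ⟨r', hr', h⟩ := (ih o).1 h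
        exact ⟨r', hr'.trans (Nat.lt_succ_self r), h⟩
      · exact ⟨r, Nat.lt_succ_self r, h⟩
    · rintro ⟨r', hr', h⟩
      rcases Nat.lt_succ_iff_lt_or_eq.1 hr' with h' | rfl
      · exact Or.inl ((ih o).2 ⟨r', h', h⟩)
      · exact Or.inr h

lemma Tunion_mono (R : Pref n) (A : Equiv.Perm (Fin n)) {r s : ℕ} (h : r ≤ s) :
    Tunion R A r ⊆ Tunion R A s := by
  intro o ho
  obtain ⟨r', hr', h'⟩ := (mem_Tunion R A r o).1 ho
  exact (mem_Tunion R A s o).2 ⟨r', hr'.trans_le h, h'⟩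

lemma eaM_zero' (R : Pref n) (P : Fin n → Fin n → ℝ) : eaM R P 0 = Set.univ := rfl

lemma eaState_snd (R : Pref n) (P : Fin n → Fin n → ℝ) :
    ∀ r o, (eaState R P r).2 o = {j | ∃ r' ≤ r, j ∈ eaE R P r' o} := by
  intro r
  induction r with
  | zero =>
    intro o
    ext j
    simp only [eaState, eaE, eaM, Set.mem_setOf_eq]
    constructor
    · intro h; exact ⟨0, le_refl 0, h⟩
    · rintro ⟨r', hr', h⟩
      obtain rfl := Nat.le_zero.1 hr'
      exact h
  | succ r ih =>
    intro o
    show (eaState R P r).2 o ∪ {j | IsTopIn R j (eaM R P (r+1)) o} = _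
    ext j
    simp only [Set.mem_union, Set.mem_setOf_eq, ih]
    constructor
    · rintro (⟨r', hr', h⟩ | h)
      · exact ⟨r', hr'.trans (Nat.le_succ r), h⟩
      · exact ⟨r+1, le_refl _, h⟩
    · rintro ⟨r', hr', h⟩
      rcases Nat.le_succ_iff.1 hr' with h' | rfl
      · exact Or.inl ⟨r', h', h⟩
      · exact Or.inr h

lemma sum_indicator_perm (A : Equiv.Perm (Fin n)) (S : Set (Fin n)) (o : Fin n) :
    ∑ k, S.indicator (fun k' => permMatrix A k' o) k = if A.symm o ∈ S then 1 else 0 := by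
  rw [Finset.sum_eq_single (A.symm o)]
  · by_cases h : A.symm o ∈ S
    · simp [Set.indicator_apply, h, permMatrix]
    · simp [Set.indicator_apply, h]
  · intro b _ hb
    have : A b ≠ o := by
      intro h; exact hb (by rw [← h, Equiv.symm_apply_apply])
    by_cases h : b ∈ S
    · simp [Set.indicator_apply, h, permMatrix, this]
    · simp [Set.indicator_apply, h]
  · intro h; exact absurd (Finset.mem_univ _) h

lemma mem_eaM_succ_perm (R : Pref n) (A : Equiv.Perm (Fin n)) (r : ℕ) (o : Fin n) :
    o ∈ eaM R (permMatrix A) (r+1) ↔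
      ¬ ∃ r' ≤ r, IsTopIn R (A.symm o) (eaM R (permMatrix A) r') o := by
  have h1 : o ∈ eaM R (permMatrix A) (r+1) ↔
      ∑ k, ((eaState R (permMatrix A) r).2 o).indicator
        (fun k' => permMatrix A k' o) k < 1 := Iff.rfl
  rw [h1, sum_indicator_perm, eaState_snd]
  constructor
  · intro h hex
    rw [if_pos] at h
    · exact absurd h (lt_irrefl 1)
    · obtain ⟨r', hr', htop⟩ := hex
      exact ⟨r', hr', htop⟩
  · intro h
    rw [if_neg]
    · exact zero_lt_one
    · intro hmem
      obtain ⟨r', hr', htop⟩ := hmem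
      exact h ⟨r', hr', htop⟩

lemma eaM_succ_subset (R : Pref n) (A : Equiv.Perm (Fin n)) (s : ℕ) :
    eaM R (permMatrix A) (s+1) ⊆ eaM R (permMatrix A) s := by
  cases s with
  | zero => exact fun o _ => Set.mem_univ o
  | succ t =>
    intro o ho
    rw [mem_eaM_succ_perm] at ho ⊢
    rintro ⟨r', hr', htop⟩
    exact ho ⟨r', hr'.trans (Nat.le_succ t), htop⟩

lemma eaM_antitone (R : Pref n) (A : Equiv.Perm (Fin n)) {r s : ℕ} (h : r ≤ s) :
    eaM R (permMatrix A) s ⊆ eaM R (permMatrix A) r := by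
  induction s, h using Nat.le_induction with
  | base => exact fun _ h => h
  | succ s hs ih => exact fun o ho => ih (eaM_succ_subset R A s ho)

lemma upperSum_perm_iff (R : Pref n) (A : Equiv.Perm (Fin n)) (j o : Fin n) :
    upperSum (R j) (permMatrix A j) o = 1 ↔ (R j (A j) o ∨ A j = o) := by
  unfold upperSum
  have : ∑ x, (ucs (R j) o).indicator (permMatrix A j) x
      = if A j ∈ ucs (R j) o then 1 else 0 := by
    rw [Finset.sum_eq_single (A j)]
    · by_cases h : A j ∈ ucs (R j) o
      · simp [Set.indicator_apply, h, permMatrix]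
      · simp [Set.indicator_apply, h]
    · intro b _ hb
      by_cases h : b ∈ ucs (R j) o
      · simp [Set.indicator_apply, h, permMatrix, Ne.symm hb]
      · simp [Set.indicator_apply, h]
    · intro h; exact absurd (Finset.mem_univ _) h
  rw [this]
  by_cases h : A j ∈ ucs (R j) o
  · simp only [if_pos h]
    exact ⟨fun _ => h, fun _ => trivial⟩
  · simp only [if_neg h]
    constructor
    · intro h0; exact absurd h0 (by norm_num)
    · intro hh; exact absurd hh h

lemma isTopIn_mono {R : Pref n} {j : Fin n} {S T : Set (Fin n)} {o : Fin n}
    (h : IsTopIn R j S o) (hTS : T ⊆ S) (ho : o ∈ T) : IsTopIn R j T o :=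
  ⟨ho, fun o' h' hne => h.2 o' (hTS h') hne⟩

lemma pref_asymm {R : Pref n} (hR : IsProfile R) (j : Fin n) {a b : Fin n}
    (h : R j a b) : ¬ R j b a := by
  haveI := hR j
  exact asymm h

lemma pref_irrefl {R : Pref n} (hR : IsProfile R) (j : Fin n) {a : Fin n}
    (h : R j a a) : False := by
  haveI := hR j
  exact irrefl a h

lemma exists_top_imp_mem (R : Pref n) (A : Equiv.Perm (Fin n)) {r : ℕ} {o : Fin n}
    (h : ∃ r' ≤ r, IsTopIn R (A.symm o) (Tunion R A r')ᶜ o) :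
    o ∈ Tunion R A (r+1) := by
  obtain ⟨r', hr', htop⟩ := h
  refine (mem_Tunion R A (r+1) o).2 ⟨r', Nat.lt_succ_of_le hr', ?_⟩
  refine ⟨A.symm o, ?_, htop⟩
  rw [Equiv.apply_symm_apply]
  exact htop.1

lemma topOwner (R : Pref n) (hR : IsProfile R) (A : Equiv.Perm (Fin n))
    (hEa : EaFERI R (permMatrix A)) (r : ℕ)
    (heq : eaM R (permMatrix A) r = (Tunion R A r)ᶜ)
    {o : Fin n} (ho : o ∈ Tset R A r) :
    IsTopIn R (A.symm o) (Tunion R A r)ᶜ o := by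
  obtain ⟨j, hj, hjtop⟩ := ho
  have hoM : o ∈ eaM R (permMatrix A) r := by rw [heq]; exact hjtop.1
  by_cases hsucc : o ∈ eaM R (permMatrix A) (r+1)
  · have hje : j ∈ eaE R (permMatrix A) r o := by
      show IsTopIn R j (eaM R (permMatrix A) r) o
      rw [heq]; exact hjtop
    have hup := hEa (r+1) o hsucc j ⟨r, Nat.lt_succ_self r, hje⟩
    rcases (upperSum_perm_iff R A j o).1 hup with h | h
    · exfalso
      have hne : A j ≠ o := by
        intro he; rw [he] at h; exact pref_irrefl hR j h
      exact pref_asymm hR j (hjtop.2 (A j) hj hne) h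
    · have : j = A.symm o := by rw [← h, Equiv.symm_apply_apply]
      rw [← this]; exact hjtop
  · rw [mem_eaM_succ_perm] at hsucc
    obtain ⟨r', hr', htop⟩ := not_not.1 hsucc
    have := isTopIn_mono htop (eaM_antitone R A hr') hoM
    rw [heq] at this
    exact this

lemma key_ea (R : Pref n) (hR : IsProfile R) (A : Equiv.Perm (Fin n))
    (hEa : EaFERI R (permMatrix A)) :
    ∀ r, eaM R (permMatrix A) r = (Tunion R A r)ᶜ := by
  intro r
  induction r using Nat.strong_induction_on with
  | _ r ih =>
    match r with
    | 0 => simp [eaM_zero', Tunion]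
    | r+1 =>
      ext o
      rw [Set.mem_compl_iff, mem_eaM_succ_perm]
      constructor
      · intro h hmem
        obtain ⟨r', hr', hts⟩ := (mem_Tunion R A (r+1) o).1 hmem
        have hr'le : r' ≤ r := Nat.lt_succ_iff.1 hr'
        have htop := topOwner R hR A hEa r' (ih r' hr') hts
        refine h ⟨r', hr'le, ?_⟩
        rw [ih r' hr']
        exact htop
      · intro h hex
        obtain ⟨r', hr', htop⟩ := hex
        rw [ih r' (Nat.lt_succ_of_le hr')] at htop
        exact h (exists_top_imp_mem R A ⟨r', hr', htop⟩)

lemma key_feri (R : Pref n) (A : Equiv.Perm (Fin n)) (hF : FERI R A) :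
    ∀ r, eaM R (permMatrix A) r = (Tunion R A r)ᶜ := by
  intro r
  induction r using Nat.strong_induction_on with
  | _ r ih =>
    match r with
    | 0 => simp [eaM_zero', Tunion]
    | r+1 =>
      ext o
      rw [Set.mem_compl_iff, mem_eaM_succ_perm]
      constructor
      · intro h hmem
        obtain ⟨r', hr', hts⟩ := (mem_Tunion R A (r+1) o).1 hmem
        have hr'le : r' ≤ r := Nat.lt_succ_iff.1 hr'
        have htop := hF r' o hts
        refine h ⟨r', hr'le, ?_⟩
        rw [ih r' hr']
        exact htop
      · intro h hex
        obtain ⟨r', hr', htop⟩ := hex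
        rw [ih r' (Nat.lt_succ_of_le hr')] at htop
        exact h (exists_top_imp_mem R A ⟨r', hr', htop⟩)

end Aux

end FeriPaper

namespace FeriPaper
/-- A deterministic assignment satisfies FERI iff its permutation matrix
satisfies ea-FERI. -/
theorem feri_iff_eaFERI {n : ℕ} (R : Pref n) (hR : IsProfile R)
    (A : Equiv.Perm (Fin n)) : FERI R A ↔ EaFERI R (permMatrix A) := by
  constructor
  · intro hF
    rintro r o hoM j ⟨r', hr', hje⟩
    have heq := key_feri R A hF
    rw [upperSum_perm_iff]
    have hje' : IsTopIn R j (Tunion R A r')ᶜ o := by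
      rw [← heq r']; exact hje
    have hoT : o ∉ Tunion R A r := by
      rw [← Set.mem_compl_iff, ← heq r]; exact hoM
    by_cases hAj : A j ∈ Tunion R A r'
    · obtain ⟨r'', hr'', hts⟩ := (mem_Tunion R A r' (A j)).1 hAj
      have htop := hF r'' (A j) hts
      rw [Equiv.symm_apply_apply] at htop
      by_cases he : A j = o
      · exact Or.inr he
      · left
        refine htop.2 o ?_ (fun h => he h.symm)
      -- o ∈ (Tunion r'')ᶜ
        intro hoT''
        exact hoT (Tunion_mono R A (le_of_lt (hr''.trans hr')) hoT'')
    · exfalso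
      apply hoT
      have hts : o ∈ Tset R A r' := ⟨j, hAj, hje'⟩
      exact Tunion_mono R A (Nat.succ_le_of_lt hr')
        ((mem_Tunion R A (r'+1) o).2 ⟨r', Nat.lt_succ_self r', hts⟩)
  · intro hEa r o hts
    exact topOwner R hR A hEa r (key_ea R hR A hEa r) hts

end FeriPaper
end
end
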